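/- arXiv:2511.05285 — 3 statements merged into one kernel-verified Lean document; each statement's English description precedes it below -/
import Mathlib

section
/- Let 𝒢 be a hereditary graph class. The following are equivalent: (1) there is a nondecreasing function f with vc(G) ≤ f(ω(G)) for all G ∈ 𝒢; (2) there is an integer k such that every G ∈ 𝒢 has a vertex cover S with α(G[S]) ≤ k; (3) there is a positive integer n such that no graph in 𝒢 contains nK₂ or K_{n,n} as an induced subgraph. -/
namespace Awesome

open SimpleGraph

/-- Independence number of the subgraph of `G` induced by `S`. -/
noncomputable def indepNumOn {V : Type*} (G : SimpleGraph V) (S : Set V) : ℕ :=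
  sSup {k | ∃ T : Finset V, ↑T ⊆ S ∧ (∀ u ∈ T, ∀ v ∈ T, ¬ G.Adj u v) ∧ T.card = k}

/-- `H` is isomorphic to an induced subgraph of `G`. -/
def ContainsInduced {W V : Type*} (H : SimpleGraph W) (G : SimpleGraph V) : Prop :=
  ∃ S : Set V, Nonempty (H ≃g G.induce S)

/-- A path decomposition of `G`: a sequence of bags covering all vertices and edges,
with each vertex appearing in a contiguous interval of bags. -/
structure PathDecomp {V : Type*} (G : SimpleGraph V) where
  n : ℕ
  bag : Fin n → Set V
  covers_vertex : ∀ v, ∃ i, v ∈ bag i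
  covers_edge : ∀ ⦃u v⦄, G.Adj u v → ∃ i, u ∈ bag i ∧ v ∈ bag i
  interval : ∀ (v : V) (i j k : Fin n), i ≤ j → j ≤ k → v ∈ bag i → v ∈ bag k → v ∈ bag j

/-- Width of a path decomposition: the maximum bag size. -/
noncomputable def PathDecomp.width {V : Type*} {G : SimpleGraph V} (D : PathDecomp G) : ℕ :=
  Finset.univ.sup fun i => (D.bag i).ncard

/-- α-width of a path decomposition: the maximum independence number of a bag. -/
noncomputable def PathDecomp.alphaWidth {V : Type*} {G : SimpleGraph V} (D : PathDecomp G) : ℕ :=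
  Finset.univ.sup fun i => indepNumOn G (D.bag i)

/-- Pathwidth (defined as maximum bag size, i.e. the usual pathwidth plus one). -/
noncomputable def pathwidth {V : Type*} (G : SimpleGraph V) : ℕ :=
  sInf {w | ∃ D : PathDecomp G, D.width = w}

/-- α-pathwidth (path-independence number). -/
noncomputable def alphaPathwidth {V : Type*} (G : SimpleGraph V) : ℕ :=
  sInf {w | ∃ D : PathDecomp G, D.alphaWidth = w}

/-- A tree decomposition of `G`. -/
structure TreeDecomp {V : Type*} (G : SimpleGraph V) where
  ι : Type
  fintype_ι : Fintype ι
  T : SimpleGraph ι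
  connected : T.Connected
  acyclic : T.IsAcyclic
  bag : ι → Set V
  covers_vertex : ∀ v, ∃ i, v ∈ bag i
  covers_edge : ∀ ⦃u v⦄, G.Adj u v → ∃ i, u ∈ bag i ∧ v ∈ bag i
  coherent : ∀ v : V, (T.induce {i | v ∈ bag i}).Connected

/-- Width of a tree decomposition: maximum bag size. -/
noncomputable def TreeDecomp.width {V : Type*} {G : SimpleGraph V} (D : TreeDecomp G) : ℕ :=
  letI := D.fintype_ι
  Finset.univ.sup fun i => (D.bag i).ncard

/-- α-width of a tree decomposition: maximum independence number of a bag. -/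
noncomputable def TreeDecomp.alphaWidth {V : Type*} {G : SimpleGraph V} (D : TreeDecomp G) : ℕ :=
  letI := D.fintype_ι
  Finset.univ.sup fun i => indepNumOn G (D.bag i)

/-- Treewidth (defined as maximum bag size, i.e. the usual treewidth plus one). -/
noncomputable def treewidth {V : Type*} (G : SimpleGraph V) : ℕ :=
  sInf {w | ∃ D : TreeDecomp G, D.width = w}

/-- α-treewidth (tree-independence number). -/
noncomputable def alphaTreewidth {V : Type*} (G : SimpleGraph V) : ℕ :=
  sInf {w | ∃ D : TreeDecomp G, D.alphaWidth = w}

/-- A treedepth decomposition of `G`, encoded as a forest order: a partial order in which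
the set of ancestors of every vertex is a chain, and every edge of `G` joins two
comparable vertices. -/
structure TreedepthDecomp {V : Type*} (G : SimpleGraph V) where
  le : V → V → Prop
  le_refl : ∀ v, le v v
  le_trans : ∀ {u v w}, le u v → le v w → le u w
  le_antisymm : ∀ {u v}, le u v → le v u → u = v
  ancestors_chain : ∀ (v : V) {a b : V}, le a v → le b v → le a b ∨ le b a
  covers : ∀ ⦃u v⦄, G.Adj u v → le u v ∨ le v u

/-- Depth of a treedepth decomposition: the maximum number of vertices on a
root-to-leaf path, i.e. the maximum number of ancestors of a vertex (itself included). -/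
noncomputable def TreedepthDecomp.depth {V : Type*} {G : SimpleGraph V}
    (D : TreedepthDecomp G) : ℕ :=
  ⨆ v : V, ({u | D.le u v} : Set V).ncard

/-- Treedepth. -/
noncomputable def treedepth {V : Type*} (G : SimpleGraph V) : ℕ :=
  sInf {d | ∃ D : TreedepthDecomp G, D.depth = d}

/-- A vertex cover. -/
def IsVertexCover {V : Type*} (G : SimpleGraph V) (S : Set V) : Prop :=
  ∀ ⦃u v⦄, G.Adj u v → u ∈ S ∨ v ∈ S

/-- Vertex cover number. -/
noncomputable def vcNum {V : Type*} (G : SimpleGraph V) : ℕ :=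
  sInf {k | ∃ S : Set V, IsVertexCover G S ∧ S.ncard = k}

/-- Every graph on `n` vertices has a clique of size `a` or an independent set of size `b`. -/
def RamseyProp (n a b : ℕ) : Prop :=
  ∀ G : SimpleGraph (Fin n),
    (∃ s : Finset (Fin n), G.IsNClique a s) ∨ (∃ s : Finset (Fin n), Gᶜ.IsNClique b s)

/-- The Ramsey number `R(a,b)`: the least `n` such that every graph on at least `n`
vertices contains a clique of size `a` or an independent set of size `b`. -/
noncomputable def ramsey (a b : ℕ) : ℕ :=
  sInf {n | ∀ m, n ≤ m → RamseyProp m a b}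

/-- The s-claw substitution of `G`: three disjoint copies of `G`, vertices `v₁ v₂ v₃`
(each complete to one copy), and a vertex `w` adjacent exactly to `v₁, v₂, v₃`. -/
def sClaw {V : Type*} (G : SimpleGraph V) :
    SimpleGraph ((Fin 3 × V) ⊕ (Fin 3 ⊕ Unit)) :=
  SimpleGraph.fromRel fun a b =>
    match a, b with
    | Sum.inl (i, u), Sum.inl (j, v) => i = j ∧ G.Adj u v
    | Sum.inl (i, _), Sum.inr (Sum.inl j) => i = j
    | Sum.inr (Sum.inl _), Sum.inr (Sum.inr _) => True
    | _, _ => False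

/-- Vertex type of the iterated s-claw substitution sequence. -/
def SType : ℕ → Type
  | 0 => Unit
  | n + 1 => (Fin 3 × SType n) ⊕ (Fin 3 ⊕ Unit)

/-- `Sgraph 0 = K₁` and `Sgraph (n+1) = sClaw (Sgraph n)`; so the paper's `Sₙ` is `Sgraph (n-1)`. -/
def Sgraph : (n : ℕ) → SimpleGraph (SType n)
  | 0 => ⊥
  | n + 1 => sClaw (Sgraph n)

/-- A graph parameter: a map assigning a natural number to every graph. -/
abbrev GraphParam := ∀ {V : Type}, SimpleGraph V → ℕ

/-- `S` is a `(ρ,c)`-modulator of `G`: `ρ (G − S) ≤ c`. -/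
def IsModulator (ρ : GraphParam) (c : ℕ) {V : Type} (G : SimpleGraph V) (S : Set V) : Prop :=
  ρ (G.induce Sᶜ) ≤ c

/-- The `(ρ,c)`-modulator number: minimum size of a `(ρ,c)`-modulator. -/
noncomputable def modNum (ρ : GraphParam) (c : ℕ) {V : Type} (G : SimpleGraph V) : ℕ :=
  sInf {k | ∃ S : Set V, IsModulator ρ c G S ∧ S.ncard = k}

/-- The disjoint union of `n` edges. -/
def nK2 (n : ℕ) : SimpleGraph (Fin n × Fin 2) :=
  SimpleGraph.fromRel fun a b => a.1 = b.1 ∧ a.2 ≠ b.2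

/-- The disjoint union of `k` copies of the complete graph on `N` vertices. -/
def unionComplete (k N : ℕ) : SimpleGraph (Fin k × Fin N) :=
  SimpleGraph.fromRel fun a b => a.1 = b.1


open Finset

lemma pushClique {W V : Type*} {H : SimpleGraph W} {G : SimpleGraph V} (f : W ↪ V)
    (hadj : ∀ x y, H.Adj x y → G.Adj (f x) (f y)) {n : ℕ} {s : Finset W}
    (h : H.IsNClique n s) : G.IsNClique n (s.map f) := by
  constructor
  · intro a ha b hb hne
    simp only [Finset.coe_map, Set.mem_image, Finset.mem_coe] at ha hb
    obtain ⟨x, hx, rfl⟩ := ha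
    obtain ⟨y, hy, rfl⟩ := hb
    exact hadj x y (h.1 hx hy fun e => hne (congrArg f e))
  · rw [Finset.card_map, h.2]

lemma ramseyAux : ∀ a b : ℕ, ∃ N : ℕ, ∀ (V : Type) (_inst : Fintype V) (G : SimpleGraph V),
    N ≤ Fintype.card V →
    (∃ s : Finset V, G.IsNClique a s) ∨ (∃ s : Finset V, Gᶜ.IsNClique b s) := by
  intro a
  induction a with
  | zero => exact fun b => ⟨0, fun V _ G _ => Or.inl ⟨∅, by simp⟩⟩
  | succ a iha =>
    intro b
    induction b with
    | zero => exact ⟨0, fun V _ G _ => Or.inr ⟨∅, by simp⟩⟩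
    | succ b ihb =>
      obtain ⟨N₁, h₁⟩ := iha (b + 1)
      obtain ⟨N₂, h₂⟩ := ihb
      refine ⟨N₁ + N₂ + 1, ?_⟩
      intro V inst G hcard
      classical
      have hpos : 0 < Fintype.card V := by omega
      obtain ⟨v⟩ := Fintype.card_pos_iff.mp hpos
      set A : Finset V := univ.filter (fun u => G.Adj v u) with hA
      set B : Finset V := univ.filter (fun u => ¬ G.Adj v u ∧ u ≠ v) with hB
      have hdisj : Disjoint A B := by
        rw [Finset.disjoint_left]
        intro u hu hu'
        simp only [hA, hB, Finset.mem_filter] at hu hu'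
        exact hu'.2.1 hu.2
      have hunion : A ∪ B = univ.erase v := by
        ext u
        simp only [hA, hB, Finset.mem_union, Finset.mem_filter, Finset.mem_univ, true_and,
          Finset.mem_erase]
        constructor
        · rintro (h | h)
          · exact ⟨h.ne', trivial⟩
          · exact ⟨h.2, trivial⟩
        · intro h
          by_cases hadj : G.Adj v u
          · exact Or.inl hadj
          · exact Or.inr ⟨hadj, h.1⟩
      have hcards : A.card + B.card + 1 = Fintype.card V := by
        have := Finset.card_union_of_disjoint hdisj
        rw [hunion, Finset.card_erase_of_mem (Finset.mem_univ v), Finset.card_univ] at this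
        omega
      have hcase : N₁ ≤ A.card ∨ N₂ ≤ B.card := by omega
      rcases hcase with hc | hc
      · -- neighbors
        have := h₁ {x // x ∈ A} inferInstance (G.comap (Subtype.val))
          (by rwa [Fintype.card_coe])
        rcases this with ⟨s, hs⟩ | ⟨s, hs⟩
        · -- clique of size a among neighbors; add v
          have ht : G.IsNClique a (s.map ⟨Subtype.val, Subtype.val_injective⟩) :=
            pushClique _ (fun x y h => by simpa using h) hs
          refine Or.inl ⟨insert v _, ht.insert ?_⟩
          intro b hb
          simp only [Finset.mem_map, Function.Embedding.coeFn_mk] at hb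
          obtain ⟨⟨x, hx⟩, _, rfl⟩ := hb
          simpa [hA] using (Finset.mem_filter.mp hx).2
        · refine Or.inr ⟨s.map ⟨Subtype.val, Subtype.val_injective⟩,
            pushClique _ (fun x y h => ?_) hs⟩
          rw [compl_adj] at h ⊢
          exact ⟨fun e => h.1 (Subtype.val_injective e), fun e => h.2 (by simpa using e)⟩
      · -- non-neighbors
        have := h₂ {x // x ∈ B} inferInstance (G.comap (Subtype.val))
          (by rwa [Fintype.card_coe])
        rcases this with ⟨s, hs⟩ | ⟨s, hs⟩
        · exact Or.inl ⟨s.map ⟨Subtype.val, Subtype.val_injective⟩,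
            pushClique _ (fun x y h => by simpa using h) hs⟩
        · have ht : Gᶜ.IsNClique b (s.map ⟨Subtype.val, Subtype.val_injective⟩) := by
            refine pushClique _ (fun x y h => ?_) hs
            rw [compl_adj] at h ⊢
            exact ⟨fun e => h.1 (Subtype.val_injective e), fun e => h.2 (by simpa using e)⟩
          refine Or.inr ⟨insert v _, ht.insert ?_⟩
          intro u hu
          simp only [Finset.mem_map, Function.Embedding.coeFn_mk] at hu
          obtain ⟨⟨x, hx⟩, _, rfl⟩ := hu
          have hx' := (Finset.mem_filter.mp hx).2
          rw [compl_adj]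
          exact ⟨hx'.2.symm, fun h => hx'.1 h⟩

lemma ramseySet_nonempty (a b : ℕ) : Set.Nonempty {n | ∀ m, n ≤ m → RamseyProp m a b} := by
  obtain ⟨N, hN⟩ := ramseyAux a b
  exact ⟨N, fun m hm G => hN (Fin m) inferInstance G (by simpa using hm)⟩

lemma ramsey_spec {a b m : ℕ} (h : ramsey a b ≤ m) : RamseyProp m a b :=
  (Nat.sInf_mem (ramseySet_nonempty a b)) m h

lemma RamseyProp.mono_left {m a a' b : ℕ} (h : a ≤ a') (H : RamseyProp m a' b) :
    RamseyProp m a b := by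
  intro G
  rcases H G with ⟨s, hs⟩ | hs
  · obtain ⟨t, hts, htc⟩ := Finset.exists_subset_card_eq (show a ≤ s.card by rw [hs.2]; exact h)
    exact Or.inl ⟨t, ⟨hs.1.subset (Finset.coe_subset.mpr hts), htc⟩⟩
  · exact Or.inr hs

lemma ramsey_mono_left {a a' : ℕ} (h : a ≤ a') (b : ℕ) : ramsey a b ≤ ramsey a' b :=
  Nat.sInf_le (fun m hm => (ramsey_spec hm).mono_left h)


lemma vcSet_nonempty {V : Type*} (G : SimpleGraph V) :
    Set.Nonempty {k | ∃ S : Set V, IsVertexCover G S ∧ S.ncard = k} :=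
  ⟨(Set.univ : Set V).ncard, Set.univ, fun u v _ => Or.inl trivial, rfl⟩

lemma vcNum_le {V : Type*} {G : SimpleGraph V} {S : Set V} (h : IsVertexCover G S) :
    vcNum G ≤ S.ncard :=
  Nat.sInf_le ⟨S, h, rfl⟩

lemma exists_min_cover {V : Type*} (G : SimpleGraph V) :
    ∃ S : Set V, IsVertexCover G S ∧ S.ncard = vcNum G :=
  Nat.sInf_mem (vcSet_nonempty G)

lemma vcNum_le_of_iso {A B : Type*} {G : SimpleGraph A} {H : SimpleGraph B} (e : G ≃g H) :
    vcNum G ≤ vcNum H := by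
  obtain ⟨S, hS, hcard⟩ := exists_min_cover H
  have hcov : IsVertexCover G ((⇑e.symm) '' S) := by
    intro u v huv
    have : H.Adj (e u) (e v) := e.map_rel_iff.mpr huv
    rcases hS this with h | h
    · exact Or.inl ⟨e u, h, e.symm_apply_apply u⟩
    · exact Or.inr ⟨e v, h, e.symm_apply_apply v⟩
  calc vcNum G ≤ ((⇑e.symm) '' S).ncard := vcNum_le hcov
  _ = S.ncard := Set.ncard_image_of_injective _ (e.symm.injective)
  _ = vcNum H := hcard

lemma vcNum_eq_of_iso {A B : Type*} {G : SimpleGraph A} {H : SimpleGraph B} (e : G ≃g H) :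
    vcNum G = vcNum H :=
  le_antisymm (vcNum_le_of_iso e) (vcNum_le_of_iso e.symm)

lemma card_le_cliqueNum' {V : Type*} [Fintype V] {G : SimpleGraph V} {m : ℕ} {s : Finset V}
    (h : G.IsNClique m s) : m ≤ G.cliqueNum := by
  refine le_csSup ⟨Fintype.card V, ?_⟩ ⟨s, h⟩
  rintro k ⟨t, ht⟩
  rw [← ht.2]
  exact Finset.card_le_univ t

lemma cliqueNum_le_of_iso {A B : Type*} [Fintype A] [Fintype B] {G : SimpleGraph A}
    {H : SimpleGraph B} (e : G ≃g H) : G.cliqueNum ≤ H.cliqueNum := by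
  obtain ⟨s, hs⟩ := G.exists_isNClique_cliqueNum
  exact card_le_cliqueNum' (pushClique ⟨fun x => e x, fun x y hxy => e.toEquiv.injective hxy⟩ (fun x y h => e.map_rel_iff.mpr h) hs)

lemma cliqueNum_eq_of_iso {A B : Type*} [Fintype A] [Fintype B] {G : SimpleGraph A}
    {H : SimpleGraph B} (e : G ≃g H) : G.cliqueNum = H.cliqueNum :=
  le_antisymm (cliqueNum_le_of_iso e) (cliqueNum_le_of_iso e.symm)

lemma le_indepNumOn {V : Type*} [Finite V] {G : SimpleGraph V} {S : Set V} {T : Finset V}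
    (hTS : ↑T ⊆ S) (hind : ∀ u ∈ T, ∀ v ∈ T, ¬ G.Adj u v) : T.card ≤ indepNumOn G S := by
  have := Fintype.ofFinite V
  refine le_csSup ⟨Fintype.card V, ?_⟩ ⟨T, hTS, hind, rfl⟩
  rintro k ⟨T', _, _, rfl⟩
  exact Finset.card_le_univ T'

lemma nK2_adj {n : ℕ} {a b : Fin n × Fin 2} :
    (nK2 n).Adj a b ↔ a.1 = b.1 ∧ a.2 ≠ b.2 := by
  constructor
  · rintro ⟨hne, ⟨h1, h2⟩ | ⟨h1, h2⟩⟩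
    · exact ⟨h1, h2⟩
    · exact ⟨h1.symm, h2.symm⟩
  · rintro ⟨h1, h2⟩
    exact ⟨fun e => h2 (congrArg Prod.snd e), Or.inl ⟨h1, h2⟩⟩

lemma nK2_vc_lower {n : ℕ} {S : Set (Fin n × Fin 2)} (h : IsVertexCover (nK2 n) S) :
    n ≤ S.ncard := by
  classical
  have hedge : ∀ i : Fin n, ((i, 0) : Fin n × Fin 2) ∈ S ∨ ((i, 1) : Fin n × Fin 2) ∈ S := by
    intro i
    exact h ((nK2_adj (a := (i,0)) (b := (i,1))).mpr ⟨rfl, Fin.zero_ne_one⟩)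
  let g : Fin n → S := fun i =>
    if h0 : ((i, 0) : Fin n × Fin 2) ∈ S then ⟨(i, 0), h0⟩
    else ⟨(i, 1), (hedge i).resolve_left h0⟩
  have hfst : ∀ i, (g i : Fin n × Fin 2).1 = i := by
    intro i
    by_cases h0 : ((i, 0) : Fin n × Fin 2) ∈ S <;> simp [g, h0]
  have hginj : Function.Injective g := by
    intro i j hij
    have := congrArg (fun x : S => (x : Fin n × Fin 2).1) hij
    simpa [hfst] using this
  calc n = Nat.card (Fin n) := by simp [Nat.card_eq_fintype_card]
  _ ≤ Nat.card S := Nat.card_le_card_of_injective g hginj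
  _ = S.ncard := Nat.card_coe_set_eq S

lemma cbg_vc_lower {n : ℕ} {S : Set (Fin n ⊕ Fin n)}
    (h : IsVertexCover (completeBipartiteGraph (Fin n) (Fin n)) S) : n ≤ S.ncard := by
  classical
  have key : ∃ g : Fin n → S, Function.Injective g := by
    by_cases hl : ∀ a : Fin n, (Sum.inl a : Fin n ⊕ Fin n) ∈ S
    · exact ⟨fun a => ⟨Sum.inl a, hl a⟩, fun a b hab => by
        simpa using congrArg (fun x : S => (x : Fin n ⊕ Fin n)) hab⟩
    · push_neg at hl
      obtain ⟨a, ha⟩ := hl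
      have hr : ∀ b : Fin n, (Sum.inr b : Fin n ⊕ Fin n) ∈ S := by
        intro b
        have hadj : (completeBipartiteGraph (Fin n) (Fin n)).Adj (Sum.inl a) (Sum.inr b) := by
          simp
        exact (h hadj).resolve_left ha
      exact ⟨fun b => ⟨Sum.inr b, hr b⟩, fun a b hab => by
        simpa using congrArg (fun x : S => (x : Fin n ⊕ Fin n)) hab⟩
  obtain ⟨g, hg⟩ := key
  calc n = Nat.card (Fin n) := by simp [Nat.card_eq_fintype_card]
  _ ≤ Nat.card S := Nat.card_le_card_of_injective g hg
  _ = S.ncard := Nat.card_coe_set_eq S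

lemma cliqueNum_le_two_of_triangle_free {V : Type*} [Fintype V] {G : SimpleGraph V}
    (h : ∀ s : Finset V, ¬ G.IsNClique 3 s) : G.cliqueNum ≤ 2 := by
  refine csSup_le ⟨0, ∅, by simp⟩ ?_
  rintro m ⟨s, hs⟩
  by_contra hm
  push_neg at hm
  obtain ⟨t, hts, htc⟩ := Finset.exists_subset_card_eq (show 3 ≤ s.card by rw [hs.2]; omega)
  exact h t ⟨hs.1.subset (Finset.coe_subset.mpr hts), htc⟩

lemma nK2_cliqueNum_le {n : ℕ} : (nK2 n).cliqueNum ≤ 2 := by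
  refine cliqueNum_le_two_of_triangle_free ?_
  intro s hs
  have h3 : (univ : Finset (Fin 2)).card < s.card := by
    rw [hs.2]; simp
  obtain ⟨x, hx, y, hy, hxy, hf⟩ :=
    Finset.exists_ne_map_eq_of_card_lt_of_maps_to h3 (fun a _ => Finset.mem_univ a.2)
  exact (nK2_adj.mp (hs.1 hx hy hxy)).2 hf

lemma cbg_cliqueNum_le {n : ℕ} : (completeBipartiteGraph (Fin n) (Fin n)).cliqueNum ≤ 2 := by
  refine cliqueNum_le_two_of_triangle_free ?_
  intro s hs
  have h3 : (univ : Finset Bool).card < s.card := by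
    rw [hs.2]; simp
  obtain ⟨x, hx, y, hy, hxy, hf⟩ :=
    Finset.exists_ne_map_eq_of_card_lt_of_maps_to h3 (fun a _ => Finset.mem_univ a.isLeft)
  have := hs.1 hx hy hxy
  rcases x with x | x <;> rcases y with y | y <;> simp_all


lemma containsInduced_of {W V : Type*} {H : SimpleGraph W} {G : SimpleGraph V}
    (g : W → V) (hg : Function.Injective g)
    (hadj : ∀ a b, H.Adj a b ↔ G.Adj (g a) (g b)) :
    ContainsInduced H G := by
  refine ⟨Set.range g, ⟨⟨Equiv.ofInjective g hg, ?_⟩⟩⟩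
  intro a b
  simp only [Equiv.ofInjective_apply, comap_adj, Function.Embedding.coe_subtype]
  exact (hadj a b).symm


lemma doubleRamsey (n : ℕ) : ∃ N : ℕ, ∀ (m : ℕ) (c1 c2 : Fin m → Fin m → Prop), N ≤ m →
    ∃ H : Finset (Fin m), H.card = n ∧
      ((∀ i ∈ H, ∀ j ∈ H, i < j → c1 i j) ∨
       (∀ i ∈ H, ∀ j ∈ H, i < j → ¬ c1 i j ∧ c2 i j) ∨
       (∀ i ∈ H, ∀ j ∈ H, i < j → ¬ c1 i j ∧ ¬ c2 i j)) := by
  classical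
  obtain ⟨N₂, h₂⟩ := ramseyAux n n
  obtain ⟨N₁, h₁⟩ := ramseyAux n N₂
  refine ⟨N₁, ?_⟩
  intro m c1 c2 hm
  have := h₁ (Fin m) inferInstance (SimpleGraph.fromRel fun i j => i < j ∧ c1 i j)
    (by simpa using hm)
  rcases this with ⟨s, hs⟩ | ⟨s, hs⟩
  · -- c1-clique of size n
    refine ⟨s, hs.2, Or.inl ?_⟩
    intro i hi j hj hij
    have := hs.1 hi hj hij.ne
    rw [fromRel_adj] at this
    rcases this.2 with ⟨_, h⟩ | ⟨h', _⟩
    · exact h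
    · exact absurd h' (by omega)
  · -- c1-independent set of size N₂
    have hfalse : ∀ i ∈ s, ∀ j ∈ s, i < j → ¬ c1 i j := by
      intro i hi j hj hij hc
      have := hs.1 hi hj hij.ne
      rw [compl_adj, fromRel_adj] at this
      exact this.2 ⟨hij.ne, Or.inl ⟨hij, hc⟩⟩
    set φ := s.orderEmbOfFin hs.2 with hφ
    have hφmem : ∀ i, φ i ∈ s := fun i => s.orderEmbOfFin_mem hs.2 i
    have := h₂ (Fin N₂) inferInstance
      (SimpleGraph.fromRel fun i j => i < j ∧ c2 (φ i) (φ j)) (by simp)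
    rcases this with ⟨t, ht⟩ | ⟨t, ht⟩
    · -- c2-clique
      refine ⟨t.map φ.toEmbedding, by simp [ht.2], Or.inr (Or.inl ?_)⟩
      intro i hi j hj hij
      simp only [Finset.mem_map, RelEmbedding.coe_toEmbedding] at hi hj
      obtain ⟨i', hi', rfl⟩ := hi
      obtain ⟨j', hj', rfl⟩ := hj
      have hij' : i' < j' := φ.lt_iff_lt.mp hij
      refine ⟨hfalse _ (hφmem i') _ (hφmem j') hij, ?_⟩
      have := ht.1 hi' hj' hij'.ne
      rw [fromRel_adj] at this
      rcases this.2 with ⟨_, h⟩ | ⟨h', _⟩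
      · exact h
      · exact absurd h' (by omega)
    · -- c2-independent
      refine ⟨t.map φ.toEmbedding, by simp [ht.2], Or.inr (Or.inr ?_)⟩
      intro i hi j hj hij
      simp only [Finset.mem_map, RelEmbedding.coe_toEmbedding] at hi hj
      obtain ⟨i', hi', rfl⟩ := hi
      obtain ⟨j', hj', rfl⟩ := hj
      have hij' : i' < j' := φ.lt_iff_lt.mp hij
      refine ⟨hfalse _ (hφmem i') _ (hφmem j') hij, ?_⟩
      intro hc
      have := ht.1 hi' hj' hij'.ne
      rw [compl_adj, fromRel_adj] at this
      exact this.2 ⟨hij'.ne, Or.inl ⟨hij', hc⟩⟩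


lemma exists_good_cover (n : ℕ) : ∃ k : ℕ, ∀ (V : Type) (G : SimpleGraph V), Finite V →
    ¬ ContainsInduced (nK2 n) G →
    ¬ ContainsInduced (completeBipartiteGraph (Fin n) (Fin n)) G →
    ∃ S : Set V, IsVertexCover G S ∧ indepNumOn G S ≤ k := by
  classical
  obtain ⟨N, hN⟩ := doubleRamsey (n + n)
  refine ⟨N, ?_⟩
  intro V G hfinV hnk2 hcbg
  have := Fintype.ofFinite V
  obtain ⟨S, hScov, hScard⟩ := exists_min_cover G
  refine ⟨S, hScov, ?_⟩
  refine csSup_le ⟨0, ∅, by simp⟩ ?_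
  rintro m ⟨T, hTS, hTind, rfl⟩
  by_contra hm
  push_neg at hm
  -- `T` is an independent subset of the minimum cover `S` with `|T| > N`.
  -- Step 1 (Hall): find an injective system of distinct representatives into `V \ S`.
  set t : {x // x ∈ T} → Finset V :=
    fun x => univ.filter (fun y => G.Adj ↑x y ∧ y ∉ S) with ht
  have hall : ∀ s : Finset {x // x ∈ T}, s.card ≤ (s.biUnion t).card := by
    intro s
    by_contra hlt
    push_neg at hlt
    set A : Finset V := s.image Subtype.val with hA
    have hAcard : A.card = s.card := Finset.card_image_of_injective s Subtype.val_injective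
    set B : Finset V := s.biUnion t with hB
    have hAT : ∀ u ∈ A, u ∈ T := by
      intro u hu
      simp only [hA, Finset.mem_image] at hu
      obtain ⟨x, _, rfl⟩ := hu
      exact x.2
    have hAS : ∀ u ∈ A, u ∈ S.toFinset := by
      intro u hu
      rw [Set.mem_toFinset]
      exact hTS (hAT u hu)
    set S' : Finset V := (S.toFinset \ A) ∪ B with hS'
    have hcov' : IsVertexCover G ↑S' := by
      intro u v huv
      have main : ∀ w z : V, G.Adj w z → w ∈ S → (w : V) ∈ S' ∨ z ∈ S' := by
        intro w z hwz hwS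
        by_cases hwA : w ∈ A
        · -- w is in A; find where z goes
          by_cases hzS : z ∈ S
          · -- z ∈ S; z can't be in A (independence), so z ∈ S \ A
            have hzA : z ∉ A := by
              intro hzA
              exact hTind w (hAT w hwA) z (hAT z hzA) hwz
            refine Or.inr ?_
            simp only [hS', Finset.mem_union, Finset.mem_sdiff, Set.mem_toFinset]
            exact Or.inl ⟨hzS, hzA⟩
          · -- z ∉ S: z is a B-vertex
            obtain ⟨x, hx, rfl⟩ := by
              simpa only [hA, Finset.mem_image] using hwA
            refine Or.inr ?_
            simp only [hS', Finset.mem_union, hB, Finset.mem_biUnion]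
            refine Or.inr ⟨x, hx, ?_⟩
            simp only [ht, Finset.mem_filter, Finset.mem_univ, true_and]
            exact ⟨hwz, hzS⟩
        · refine Or.inl ?_
          simp only [hS', Finset.mem_union, Finset.mem_sdiff, Set.mem_toFinset]
          exact Or.inl ⟨hwS, hwA⟩
      rcases hScov huv with hu | hv
      · exact main u v huv hu
      · rcases main v u huv.symm hv with h | h
        · exact Or.inr h
        · exact Or.inl h
    have hsize : S'.card < S.toFinset.card := by
      have h1 : S'.card ≤ (S.toFinset \ A).card + B.card := Finset.card_union_le _ _
      have h2 : (S.toFinset \ A).card = S.toFinset.card - A.card :=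
        Finset.card_sdiff_of_subset (fun u hu => hAS u hu)
      have h3 : A.card ≤ S.toFinset.card :=
        Finset.card_le_card (fun u hu => hAS u hu)
      omega
    have : vcNum G ≤ S'.card := by
      have := vcNum_le hcov'
      rwa [Set.ncard_coe_finset] at this
    rw [← hScard, Set.ncard_eq_toFinset_card'] at this
    omega
  obtain ⟨f, hfinj, hf⟩ := (Finset.all_card_le_biUnion_card_iff_exists_injective t).mp hall
  have hfadj : ∀ x : {x // x ∈ T}, G.Adj ↑x (f x) :=
    fun x => ((Finset.mem_filter.mp (hf x)).2).1
  have hfS : ∀ x : {x // x ∈ T}, f x ∉ S :=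
    fun x => ((Finset.mem_filter.mp (hf x)).2).2
  -- Step 2: index by Fin m
  set m := T.card with hmdef
  set e : Fin m ≃ {x // x ∈ T} := (Fintype.equivFinOfCardEq (Fintype.card_coe T)).symm with he
  set X : Fin m → V := fun i => ↑(e i) with hX
  set Y : Fin m → V := fun i => f (e i) with hY
  have hXT : ∀ i, X i ∈ T := fun i => (e i).2
  have hXS : ∀ i, X i ∈ S := fun i => hTS (hXT i)
  have hYS : ∀ i, Y i ∉ S := fun i => hfS (e i)
  have hXinj : Function.Injective X :=
    fun i j h => e.injective (Subtype.val_injective h)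
  have hYinj : Function.Injective Y := fun i j h => e.injective (hfinj h)
  have hXY : ∀ i j, X i ≠ Y j := fun i j h => hYS j (h ▸ hXS i)
  have hadjXY : ∀ i, G.Adj (X i) (Y i) := fun i => hfadj (e i)
  have hnoXX : ∀ i j, ¬ G.Adj (X i) (X j) := fun i j => hTind _ (hXT i) _ (hXT j)
  have hnoYY : ∀ i j, ¬ G.Adj (Y i) (Y j) := by
    intro i j h
    rcases hScov h with h' | h'
    · exact hYS i h'
    · exact hYS j h'
  -- Step 3: double Ramsey
  obtain ⟨H, hHcard, hHcase⟩ := hN m (fun i j => G.Adj (X i) (Y j))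
    (fun i j => G.Adj (X j) (Y i)) (by omega)
  set φ := H.orderEmbOfFin hHcard with hφ
  have hφmem : ∀ i, φ i ∈ H := fun i => H.orderEmbOfFin_mem hHcard i
  have hφlt : ∀ {i j}, i < j → φ i < φ j := fun h => φ.strictMono h
  have hcast_lt_nat : ∀ (i j : Fin n), (Fin.castAdd n i) < (Fin.natAdd n j) := by
    intro i j
    simp only [Fin.lt_def, Fin.coe_castAdd, Fin.coe_natAdd]
    omega
  have hcastinj : ∀ {i j : Fin n}, Fin.castAdd n i = Fin.castAdd n j → i = j := by
    intro i j h
    have := congrArg Fin.val h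
    simp only [Fin.coe_castAdd] at this
    exact Fin.ext this
  have hnatinj : ∀ {i j : Fin n}, Fin.natAdd n i = Fin.natAdd n j → i = j := by
    intro i j h
    have := congrArg Fin.val h
    simp only [Fin.coe_natAdd] at this
    exact Fin.ext (by omega)
  rcases hHcase with hc | hc | hc
  · -- K_{n,n} : X on castAdd side, Y on natAdd side
    refine hcbg (containsInduced_of
      (Sum.elim (fun i => X (φ (Fin.castAdd n i))) (fun j => Y (φ (Fin.natAdd n j))))
      ?_ ?_)
    · rintro (i | i) (j | j) h <;> simp only [Sum.elim_inl, Sum.elim_inr] at h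
      · exact congrArg Sum.inl (hcastinj (φ.injective (hXinj h)))
      · exact absurd h (hXY _ _)
      · exact absurd h.symm (hXY _ _)
      · exact congrArg Sum.inr (hnatinj (φ.injective (hYinj h)))
    · rintro (i | i) (j | j)
      · exact iff_of_false (by simp) (hnoXX _ _)
      · exact iff_of_true (by simp)
          (hc _ (hφmem _) _ (hφmem _) (hφlt (hcast_lt_nat i j)))
      · exact iff_of_true (by simp)
          ((hc _ (hφmem _) _ (hφmem _) (hφlt (hcast_lt_nat j i))).symm)
      · exact iff_of_false (by simp) (hnoYY _ _)
  · -- K_{n,n} : X on natAdd side, Y on castAdd side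
    refine hcbg (containsInduced_of
      (Sum.elim (fun i => X (φ (Fin.natAdd n i))) (fun j => Y (φ (Fin.castAdd n j))))
      ?_ ?_)
    · rintro (i | i) (j | j) h <;> simp only [Sum.elim_inl, Sum.elim_inr] at h
      · exact congrArg Sum.inl (hnatinj (φ.injective (hXinj h)))
      · exact absurd h (hXY _ _)
      · exact absurd h.symm (hXY _ _)
      · exact congrArg Sum.inr (hcastinj (φ.injective (hYinj h)))
    · rintro (i | i) (j | j)
      · exact iff_of_false (by simp) (hnoXX _ _)
      · exact iff_of_true (by simp)
          ((hc _ (hφmem _) _ (hφmem _) (hφlt (hcast_lt_nat j i))).2)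
      · exact iff_of_true (by simp)
          ((hc _ (hφmem _) _ (hφmem _) (hφlt (hcast_lt_nat i j))).2.symm)
      · exact iff_of_false (by simp) (hnoYY _ _)
  · -- induced nK2
    have hno : ∀ i j : Fin n, i ≠ j →
        ¬ G.Adj (X (φ (Fin.castAdd n i))) (Y (φ (Fin.castAdd n j))) := by
      intro i j hij hadj
      have hne : Fin.castAdd n i ≠ Fin.castAdd n j := fun h => hij (hcastinj h)
      rcases lt_or_gt_of_ne hne with h | h
      · exact (hc _ (hφmem _) _ (hφmem _) (hφlt h)).1 hadj
      · exact (hc _ (hφmem _) _ (hφmem _) (hφlt h)).2 hadj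
    have hfin2 : ∀ c : Fin 2, c ≠ 0 → c = 1 := by decide
    set g : Fin n × Fin 2 → V := fun p =>
      if p.2 = 0 then X (φ (Fin.castAdd n p.1)) else Y (φ (Fin.castAdd n p.1)) with hg
    have hg0 : ∀ i : Fin n, g (i, 0) = X (φ (Fin.castAdd n i)) := fun i => if_pos rfl
    have hg1 : ∀ i : Fin n, g (i, 1) = Y (φ (Fin.castAdd n i)) := fun i => if_neg one_ne_zero
    refine hnk2 (containsInduced_of g ?_ ?_)
    · rintro ⟨i, c⟩ ⟨j, d⟩ hpq
      by_cases h1 : c = 0 <;> by_cases h2 : d = 0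
      · subst h1; subst h2
        rw [hg0, hg0] at hpq
        exact Prod.ext (hcastinj (φ.injective (hXinj hpq))) rfl
      · rw [hfin2 d h2] at hpq ⊢
        subst h1
        rw [hg0, hg1] at hpq
        exact absurd hpq (hXY _ _)
      · rw [hfin2 c h1] at hpq ⊢
        subst h2
        rw [hg1, hg0] at hpq
        exact absurd hpq.symm (hXY _ _)
      · rw [hfin2 c h1] at hpq ⊢; rw [hfin2 d h2] at hpq ⊢
        rw [hg1, hg1] at hpq
        exact Prod.ext (hcastinj (φ.injective (hYinj hpq))) rfl
    · rintro ⟨i, c⟩ ⟨j, d⟩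
      rw [nK2_adj]
      by_cases h1 : c = 0 <;> by_cases h2 : d = 0
      · subst h1; subst h2
        rw [hg0, hg0]
        exact iff_of_false (by simp) (hnoXX _ _)
      · rw [hfin2 d h2]; subst h1
        rw [hg0, hg1]
        constructor
        · rintro ⟨h, _⟩
          simp only at h
          subst h
          exact hadjXY _
        · intro h
          refine ⟨?_, zero_ne_one⟩
          by_contra hij
          exact hno i j (by simpa using hij) h
      · rw [hfin2 c h1]; subst h2
        rw [hg1, hg0]
        constructor
        · rintro ⟨h, _⟩
          simp only at h
          subst h
          exact (hadjXY _).symm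
        · intro h
          refine ⟨?_, one_ne_zero⟩
          by_contra hij
          exact hno j i (by simpa [eq_comm] using hij) h.symm
      · rw [hfin2 c h1]; rw [hfin2 d h2]
        rw [hg1, hg1]
        exact iff_of_false (by simp) (hnoYY _ _)



theorem stmt11 (𝒢 : ∀ V : Type, SimpleGraph V → Prop)
    (hfin : ∀ (V : Type) (G : SimpleGraph V), 𝒢 V G → Finite V)
    (hered : ∀ (V : Type) (G : SimpleGraph V), 𝒢 V G → ∀ S : Set V, 𝒢 S (G.induce S)) :
    List.TFAE
      [ ∃ f : ℕ → ℕ, Monotone f ∧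
          ∀ (V : Type) (G : SimpleGraph V), 𝒢 V G → vcNum G ≤ f G.cliqueNum,
        ∃ k : ℕ, ∀ (V : Type) (G : SimpleGraph V), 𝒢 V G →
          ∃ S : Set V, IsVertexCover G S ∧ indepNumOn G S ≤ k,
        ∃ n : ℕ, 0 < n ∧ ∀ (V : Type) (G : SimpleGraph V), 𝒢 V G →
          ¬ ContainsInduced (nK2 n) G ∧
          ¬ ContainsInduced (completeBipartiteGraph (Fin n) (Fin n)) G ] := by
  tfae_have 1 → 3
  · rintro ⟨f, hf, h1⟩
    refine ⟨f 2 + 1, by omega, ?_⟩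
    intro V G hG
    constructor
    · rintro ⟨S, ⟨e⟩⟩
      have hGS := hered V G hG S
      have hfinS : Finite ↥S := hfin S (G.induce S) hGS
      have : Fintype ↥S := Fintype.ofFinite ↥S
      have hvc := h1 S (G.induce S) hGS
      have h2 : vcNum (nK2 (f 2 + 1)) = vcNum (G.induce S) := vcNum_eq_of_iso e
      have h3 : (nK2 (f 2 + 1)).cliqueNum = (G.induce S).cliqueNum := cliqueNum_eq_of_iso e
      obtain ⟨S₀, hS₀, hS₀card⟩ := exists_min_cover (nK2 (f 2 + 1))
      have hlow : f 2 + 1 ≤ vcNum (nK2 (f 2 + 1)) := hS₀card ▸ nK2_vc_lower hS₀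
      have hmono : f ((G.induce S).cliqueNum) ≤ f 2 := hf (h3 ▸ nK2_cliqueNum_le)
      omega
    · rintro ⟨S, ⟨e⟩⟩
      have hGS := hered V G hG S
      have hfinS : Finite ↥S := hfin S (G.induce S) hGS
      have : Fintype ↥S := Fintype.ofFinite ↥S
      have hvc := h1 S (G.induce S) hGS
      have h2 : vcNum (completeBipartiteGraph (Fin (f 2 + 1)) (Fin (f 2 + 1)))
          = vcNum (G.induce S) := vcNum_eq_of_iso e
      have h3 : (completeBipartiteGraph (Fin (f 2 + 1)) (Fin (f 2 + 1))).cliqueNum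
          = (G.induce S).cliqueNum := cliqueNum_eq_of_iso e
      obtain ⟨S₀, hS₀, hS₀card⟩ :=
        exists_min_cover (completeBipartiteGraph (Fin (f 2 + 1)) (Fin (f 2 + 1)))
      have hlow : f 2 + 1 ≤ vcNum (completeBipartiteGraph (Fin (f 2 + 1)) (Fin (f 2 + 1))) :=
        hS₀card ▸ cbg_vc_lower hS₀
      have hmono : f ((G.induce S).cliqueNum) ≤ f 2 := hf (h3 ▸ cbg_cliqueNum_le)
      omega
  tfae_have 3 → 2
  · rintro ⟨n, _, h3⟩
    obtain ⟨k, hk⟩ := exists_good_cover n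
    exact ⟨k, fun V G hG => hk V G (hfin V G hG) (h3 V G hG).1 (h3 V G hG).2⟩
  tfae_have 2 → 1
  · rintro ⟨k, h2⟩
    refine ⟨fun w => ramsey (w + 1) (k + 1),
      fun w w' hw => ramsey_mono_left (by omega) _, ?_⟩
    intro V G hG
    have hfinV : Finite V := hfin V G hG
    have : Fintype V := Fintype.ofFinite V
    obtain ⟨S, hScov, hSind⟩ := h2 V G hG
    have : Fintype ↥S := Fintype.ofFinite ↥S
    have hvc : vcNum G ≤ S.ncard := vcNum_le hScov
    by_contra hlt
    push_neg at hlt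
    have hge : ramsey (G.cliqueNum + 1) (k + 1) ≤ S.ncard := by omega
    have hR := ramsey_spec hge
    have hcardeq : Fintype.card ↥S = S.ncard := by
      rw [← Nat.card_eq_fintype_card, Nat.card_coe_set_eq]
    set ψ : Fin (S.ncard) → V := fun i => ((Fintype.equivFinOfCardEq hcardeq).symm i : V)
      with hψ
    have hψS : ∀ i, ψ i ∈ S := fun i => ((Fintype.equivFinOfCardEq hcardeq).symm i).2
    have hψinj : Function.Injective ψ :=
      fun i j h => (Fintype.equivFinOfCardEq hcardeq).symm.injective (Subtype.val_injective h)
    rcases hR (G.comap ψ) with ⟨s, hs⟩ | ⟨s, hs⟩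
    · have hclique : G.IsNClique (G.cliqueNum + 1) (s.map ⟨ψ, hψinj⟩) :=
        pushClique ⟨ψ, hψinj⟩ (fun x y h => h) hs
      have := card_le_cliqueNum' hclique
      omega
    · set T := s.map ⟨ψ, hψinj⟩ with hT
      have hTS : ↑T ⊆ S := by
        intro u hu
        simp only [hT, Finset.coe_map, Set.mem_image, Finset.mem_coe,
          Function.Embedding.coeFn_mk] at hu
        obtain ⟨x, _, rfl⟩ := hu
        exact hψS x
      have hTind : ∀ u ∈ T, ∀ v ∈ T, ¬ G.Adj u v := by
        intro u hu v hv
        simp only [hT, Finset.mem_map, Function.Embedding.coeFn_mk] at hu hv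
        obtain ⟨x, hx, rfl⟩ := hu
        obtain ⟨y, hy, rfl⟩ := hv
        by_cases hxy : x = y
        · subst hxy
          exact G.irrefl
        · have := hs.1 hx hy hxy
          rw [compl_adj] at this
          exact fun h => this.2 h
      have hle := le_indepNumOn hTS hTind
      have hTcard : T.card = k + 1 := by rw [hT, Finset.card_map, hs.2]
      omega
  tfae_finish


end Awesome
end

section
/- The treedepth of the path on n vertices equals ⌈log₂(n+1)⌉. -/
namespace Awesome

open SimpleGraph

def anc (a b u v : ℕ) : Prop :=
  if b ≤ a + 1 then u = v
  else
    u = (a+b)/2 ∨ (v < (a+b)/2 ∧ anc a ((a+b)/2) u v) ∨ ((a+b)/2 < v ∧ anc ((a+b)/2 + 1) b u v)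
termination_by b - a
decreasing_by all_goals omega

lemma anc_self (a b v : ℕ) (h1 : a ≤ v) (h2 : v < b) : anc a b v v := by
  rw [anc]
  split_ifs with h
  · rfl
  · rcases lt_trichotomy v ((a+b)/2) with hv | hv | hv
    · exact Or.inr (Or.inl ⟨hv, anc_self a _ v h1 hv⟩)
    · exact Or.inl hv
    · exact Or.inr (Or.inr ⟨hv, anc_self _ b v (by omega) h2⟩)
termination_by b - a
decreasing_by all_goals omega

lemma anc_mem (a b u v : ℕ) (h1 : a ≤ v) (h2 : v < b) (h : anc a b u v) :
    a ≤ u ∧ u < b := by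
  rw [anc] at h
  split_ifs at h with hb
  · omega
  · rcases h with h | ⟨hv, h⟩ | ⟨hv, h⟩
    · omega
    · have := anc_mem a _ u v h1 hv h; omega
    · have := anc_mem _ b u v (by omega) h2 h; omega
termination_by b - a
decreasing_by all_goals omega

lemma anc_to_mid (a b u : ℕ) (hb : ¬ b ≤ a + 1) (h : anc a b u ((a+b)/2)) : u = (a+b)/2 := by
  rw [anc, if_neg hb] at h
  rcases h with h | ⟨hv, _⟩ | ⟨hv, _⟩ <;> omega

lemma anc_mid (a b v : ℕ) (hb : ¬ b ≤ a + 1) : anc a b ((a+b)/2) v := by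
  rw [anc, if_neg hb]; exact Or.inl rfl

lemma anc_trans (a b u v w : ℕ) (h1 : a ≤ w) (h2 : w < b)
    (huv : anc a b u v) (hvw : anc a b v w) : anc a b u w := by
  rw [anc] at huv hvw ⊢
  split_ifs at huv hvw ⊢ with hb
  · omega
  · rcases hvw with hvw | ⟨hw, hvw⟩ | ⟨hw, hvw⟩
    · subst hvw
      have := anc_to_mid a b u hb (by rw [anc, if_neg hb]; exact huv)
      exact Or.inl this
    · -- w < mid, anc a mid v w
      have hvmem := anc_mem a _ v w h1 hw hvw
      rcases huv with huv | ⟨hv, huv⟩ | ⟨hv, huv⟩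
      · exact Or.inl huv
      · exact Or.inr (Or.inl ⟨hw, anc_trans a _ u v w h1 hw huv hvw⟩)
      · omega
    · have hvmem := anc_mem _ b v w (by omega) h2 hvw
      rcases huv with huv | ⟨hv, huv⟩ | ⟨hv, huv⟩
      · exact Or.inl huv
      · omega
      · exact Or.inr (Or.inr ⟨hw, anc_trans _ b u v w (by omega) h2 huv hvw⟩)
termination_by b - a
decreasing_by all_goals omega

lemma anc_antisymm (a b u v : ℕ) (h1 : a ≤ v) (h2 : v < b)
    (huv : anc a b u v) (hvu : anc a b v u) : u = v := by
  rw [anc] at huv hvu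
  split_ifs at huv hvu with hb
  · exact huv
  · rcases huv with huv | ⟨hv, huv⟩ | ⟨hv, huv⟩
    · rcases hvu with hvu | ⟨hu, hvu⟩ | ⟨hu, hvu⟩ <;> omega
    · have humem := anc_mem a _ u v h1 hv huv
      rcases hvu with hvu | ⟨hu, hvu⟩ | ⟨hu, hvu⟩
      · omega
      · exact anc_antisymm a _ u v h1 hv huv hvu
      · omega
    · have humem := anc_mem _ b u v (by omega) h2 huv
      rcases hvu with hvu | ⟨hu, hvu⟩ | ⟨hu, hvu⟩
      · omega
      · omega
      · exact anc_antisymm _ b u v (by omega) h2 huv hvu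
termination_by b - a
decreasing_by all_goals omega

lemma anc_chain (a b u u' v : ℕ) (h1 : a ≤ v) (h2 : v < b)
    (hu : anc a b u v) (hu' : anc a b u' v) : anc a b u u' ∨ anc a b u' u := by
  rw [anc] at hu hu'
  split_ifs at hu hu' with hb
  · subst hu; subst hu'; exact Or.inl (anc_self _ _ _ h1 h2)
  · rcases hu with hu | ⟨hv, hu⟩ | ⟨hv, hu⟩
    · subst hu; exact Or.inl (anc_mid a b u' hb)
    · rcases hu' with hu' | ⟨hv', hu'⟩ | ⟨hv', hu'⟩
      · subst hu'; exact Or.inr (anc_mid a b u hb)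
      · have hmemu := anc_mem a _ u v h1 hv hu
        have hmemu' := anc_mem a _ u' v h1 hv hu'
        rcases anc_chain a _ u u' v h1 hv hu hu' with h | h
        · exact Or.inl (by rw [anc, if_neg hb]; exact Or.inr (Or.inl ⟨by omega, h⟩))
        · exact Or.inr (by rw [anc, if_neg hb]; exact Or.inr (Or.inl ⟨by omega, h⟩))
      · omega
    · rcases hu' with hu' | ⟨hv', hu'⟩ | ⟨hv', hu'⟩
      · subst hu'; exact Or.inr (anc_mid a b u hb)
      · omega
      · have hmemu := anc_mem _ b u v (by omega) h2 hu
        have hmemu' := anc_mem _ b u' v (by omega) h2 hu'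
        rcases anc_chain _ b u u' v (by omega) h2 hu hu' with h | h
        · exact Or.inl (by rw [anc, if_neg hb]; exact Or.inr (Or.inr ⟨by omega, h⟩))
        · exact Or.inr (by rw [anc, if_neg hb]; exact Or.inr (Or.inr ⟨by omega, h⟩))
termination_by b - a
decreasing_by all_goals omega

lemma anc_cover (a b k : ℕ) (h1 : a ≤ k) (h2 : k + 1 < b) :
    anc a b k (k+1) ∨ anc a b (k+1) k := by
  by_cases hb : b ≤ a + 1
  · omega
  · set m := (a+b)/2 with hm
    rcases lt_trichotomy (k+1) m with h | h | h
    · rcases anc_cover a m k h1 h with hc | hc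
      · exact Or.inl (by rw [anc, if_neg hb]; exact Or.inr (Or.inl ⟨h, hc⟩))
      · exact Or.inr (by rw [anc, if_neg hb]; exact Or.inr (Or.inl ⟨by omega, hc⟩))
    · refine Or.inr ?_
      have hmid := anc_mid a b k hb
      have he : (a+b)/2 = k + 1 := by omega
      rwa [he] at hmid
    · rcases eq_or_lt_of_le (show m ≤ k by omega) with h' | h'
      · refine Or.inl ?_
        have hmid := anc_mid a b (k+1) hb
        have he : (a+b)/2 = k := by omega
        rwa [he] at hmid
      · rcases anc_cover (m+1) b k (by omega) h2 with hc | hc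
        · exact Or.inl (by rw [anc, if_neg hb]; exact Or.inr (Or.inr ⟨by omega, hc⟩))
        · exact Or.inr (by rw [anc, if_neg hb]; exact Or.inr (Or.inr ⟨h', hc⟩))
termination_by b - a
decreasing_by all_goals omega

lemma anc_depth (d a b v : ℕ) (h1 : a ≤ v) (h2 : v < b) (hd : b - a ≤ 2^d - 1) :
    {u | anc a b u v}.ncard ≤ d := by
  induction d generalizing a b v with
  | zero => simp at hd; omega
  | succ d ih =>
    by_cases hb : b ≤ a + 1
    · have : {u | anc a b u v} = {v} := by
        ext u
        rw [Set.mem_setOf_eq, anc, if_pos hb, Set.mem_singleton_iff]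
      rw [this, Set.ncard_singleton]; omega
    · set m := (a+b)/2 with hm
      have hp : (1:ℕ) ≤ 2^d := Nat.one_le_two_pow
      have hps : (2:ℕ)^(d+1) = 2 * 2^d := by rw [pow_succ]; ring
      rcases lt_trichotomy v m with hv | hv | hv
      · have : {u | anc a b u v} = insert m {u | anc a m u v} := by
          ext u
          simp only [Set.mem_setOf_eq, Set.mem_insert_iff]
          rw [anc, if_neg hb]
          constructor
          · rintro (h | ⟨_, h⟩ | ⟨h, _⟩)
            · exact Or.inl h
            · exact Or.inr h
            · omega
          · rintro (h | h)
            · exact Or.inl h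
            · exact Or.inr (Or.inl ⟨hv, h⟩)
        rw [this]
        calc (insert m {u | anc a m u v}).ncard ≤ {u | anc a m u v}.ncard + 1 :=
              Set.ncard_insert_le _ _
          _ ≤ d + 1 := by
              have := ih a m v h1 hv (by omega)
              omega
      · have : {u | anc a b u v} = {m} := by
          ext u
          simp only [Set.mem_setOf_eq, Set.mem_singleton_iff]
          constructor
          · intro h; rw [hv] at h; exact anc_to_mid a b u hb h
          · intro h; rw [h, hm]; exact anc_mid a b v hb
        rw [this, Set.ncard_singleton]; omega
      · have : {u | anc a b u v} = insert m {u | anc (m+1) b u v} := by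
          ext u
          simp only [Set.mem_setOf_eq, Set.mem_insert_iff]
          rw [anc, if_neg hb]
          constructor
          · rintro (h | ⟨h, _⟩ | ⟨_, h⟩)
            · exact Or.inl h
            · omega
            · exact Or.inr h
          · rintro (h | h)
            · exact Or.inl h
            · exact Or.inr (Or.inr ⟨hv, h⟩)
        rw [this]
        calc (insert m {u | anc (m+1) b u v}).ncard ≤ {u | anc (m+1) b u v}.ncard + 1 :=
              Set.ncard_insert_le _ _
          _ ≤ d + 1 := by
              have := ih (m+1) b v (by omega) h2 (by omega)
              omega


lemma chain_min (L : ℕ → ℕ → Prop) (htr : ∀ u v w, L u v → L v w → L u w)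
    (T : Finset ℕ) (hne : T.Nonempty) (htot : ∀ u ∈ T, ∀ v ∈ T, L u v ∨ L v u) :
    ∃ r ∈ T, ∀ u ∈ T, L r u := by
  classical
  obtain ⟨r, hrT, hrmin⟩ := T.exists_min_image (fun r => (T.filter (fun u => L u r)).card) hne
  refine ⟨r, hrT, ?_⟩
  intro u hu
  rcases htot r hrT u hu with h | h
  · exact h
  · by_contra hnr
    have hsub : T.filter (fun w => L w u) ⊆ T.filter (fun w => L w r) := by
      intro w hw
      rw [Finset.mem_filter] at hw ⊢
      exact ⟨hw.1, htr w u r hw.2 h⟩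
    have hrr : L r r := by rcases htot r hrT r hrT with h' | h' <;> exact h'
    have hss : T.filter (fun w => L w u) ⊂ T.filter (fun w => L w r) := by
      refine ⟨hsub, fun hsup => ?_⟩
      have : r ∈ T.filter (fun w => L w u) := hsup (Finset.mem_filter.mpr ⟨hrT, hrr⟩)
      exact hnr (Finset.mem_filter.mp this).2
    have := Finset.card_lt_card hss
    have := hrmin u hu
    omega

lemma key (d : ℕ) (a b : ℕ) (L : ℕ → ℕ → Prop)
    (hrefl : ∀ v, a ≤ v → v < b → L v v)
    (htr : ∀ u v w, L u v → L v w → L u w)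
    (hanti : ∀ u v, L u v → L v u → u = v)
    (hch : ∀ v u u', L u v → L u' v → L u u' ∨ L u' u)
    (hcov : ∀ k, a ≤ k → k + 1 < b → L k (k+1) ∨ L (k+1) k)
    (hdep : ∀ v, a ≤ v → v < b → ({u | (a ≤ u ∧ u < b) ∧ L u v}).ncard ≤ d) :
    b ≤ a + (2^d - 1) := by
  induction d generalizing a b with
  | zero =>
    simp only [pow_zero, Nat.sub_self, add_zero]
    by_contra hab
    push_neg at hab
    have hmem : a ∈ {u | (a ≤ u ∧ u < b) ∧ L u a} := ⟨⟨le_refl a, hab⟩, hrefl a (le_refl a) hab⟩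
    have hfin : {u | (a ≤ u ∧ u < b) ∧ L u a}.Finite :=
      (Set.finite_Ico a b).subset (fun u hu => ⟨hu.1.1, hu.1.2⟩)
    have := (Set.ncard_pos hfin).mpr ⟨a, hmem⟩
    have := hdep a (le_refl a) hab
    omega
  | succ d ih =>
    by_cases hab : b ≤ a
    · have : (1:ℕ) ≤ 2^(d+1) := Nat.one_le_two_pow
      omega
    push_neg at hab
    -- the set of ancestors of a
    set S : Set ℕ := {u | (a ≤ u ∧ u < b) ∧ L u a} with hS
    have hfin : S.Finite := (Set.finite_Ico a b).subset (fun u hu => ⟨hu.1.1, hu.1.2⟩)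
    have haS : a ∈ S := ⟨⟨le_refl a, hab⟩, hrefl a (le_refl a) hab⟩
    obtain ⟨r, hrT, hrmin⟩ := chain_min L htr hfin.toFinset ⟨a, hfin.mem_toFinset.mpr haS⟩
      (fun u hu v hv => hch a u v (hfin.mem_toFinset.mp hu).2 (hfin.mem_toFinset.mp hv).2)
    have hrS : r ∈ S := hfin.mem_toFinset.mp hrT
    have hra : a ≤ r := hrS.1.1
    have hrb : r < b := hrS.1.2
    have hrmin' : ∀ u, a ≤ u → u < b → L u r → u = r := by
      intro u hu1 hu2 hur
      have : u ∈ S := ⟨⟨hu1, hu2⟩, htr u r a hur hrS.2⟩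
      exact hanti u r hur (hrmin u (hfin.mem_toFinset.mpr this))
    -- r is below everything
    have hroot : ∀ v, a ≤ v → v < b → L r v := by
      intro v hv1 hv2
      induction v with
      | zero =>
        have : a = 0 := Nat.le_zero.mp hv1
        subst this; exact hrS.2
      | succ k ihk =>
        rcases Nat.lt_or_ge k a with hk | hk
        · have : a = k + 1 := by omega
          subst this; exact hrS.2
        · have hrk : L r k := ihk hk (by omega)
          rcases hcov k hk hv2 with h | h
          · exact htr r k (k+1) hrk h
          · rcases hch k r (k+1) hrk h with h' | h'
            · exact h'
            · have hka : L (k+1) a := htr (k+1) r a h' hrS.2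
              exact hrmin (k+1) (hfin.mem_toFinset.mpr ⟨⟨by omega, hv2⟩, hka⟩)
    have hp : (1:ℕ) ≤ 2^d := Nat.one_le_two_pow
    have hps : (2:ℕ)^(d+1) = 2 * 2^d := by rw [pow_succ]; ring
    have hbig : ∀ v, a ≤ v → v < b →
        {u | (a ≤ u ∧ u < b) ∧ L u v}.ncard ≥ 1 + ({u | (a ≤ u ∧ u < b) ∧ L u v} \ {r}).ncard := by
      intro v hv1 hv2
      have hrin : r ∈ {u | (a ≤ u ∧ u < b) ∧ L u v} := ⟨hrS.1, hroot v hv1 hv2⟩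
      have hfin' : {u | (a ≤ u ∧ u < b) ∧ L u v}.Finite :=
        (Set.finite_Ico a b).subset (fun u hu => ⟨hu.1.1, hu.1.2⟩)
      have h1 := Set.ncard_diff_singleton_of_mem hrin
      have h2 := (Set.ncard_pos hfin').mpr ⟨r, hrin⟩
      omega
    have hleft : r ≤ a + (2^d - 1) := by
      apply ih a r (fun v hv1 hv2 => hrefl v hv1 (by omega))
        (fun k hk1 hk2 => hcov k hk1 (by omega))
      intro v hv1 hv2
      have hsub : {u | (a ≤ u ∧ u < r) ∧ L u v} ⊆ {u | (a ≤ u ∧ u < b) ∧ L u v} \ {r} := by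
        intro u hu
        obtain ⟨⟨hu1, hu2⟩, hu3⟩ := hu
        exact ⟨⟨⟨hu1, by omega⟩, hu3⟩, by simp; omega⟩
      have hfin2 : ({u | (a ≤ u ∧ u < b) ∧ L u v} \ {r}).Finite :=
        (((Set.finite_Ico a b).subset (fun u hu => ⟨hu.1.1, hu.1.2⟩)).diff)
      have := Set.ncard_le_ncard hsub hfin2
      have := hbig v hv1 (by omega)
      have := hdep v hv1 (by omega)
      omega
    have hright : b ≤ (r+1) + (2^d - 1) := by
      apply ih (r+1) b (fun v hv1 hv2 => hrefl v (by omega) hv2)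
        (fun k hk1 hk2 => hcov k (by omega) hk2)
      intro v hv1 hv2
      have hsub : {u | (r+1 ≤ u ∧ u < b) ∧ L u v} ⊆ {u | (a ≤ u ∧ u < b) ∧ L u v} \ {r} := by
        intro u hu
        obtain ⟨⟨hu1, hu2⟩, hu3⟩ := hu
        exact ⟨⟨⟨by omega, hu2⟩, hu3⟩, by simp; omega⟩
      have hfin2 : ({u | (a ≤ u ∧ u < b) ∧ L u v} \ {r}).Finite :=
        (((Set.finite_Ico a b).subset (fun u hu => ⟨hu.1.1, hu.1.2⟩)).diff)
      have := Set.ncard_le_ncard hsub hfin2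
      have := hbig v (by omega) hv2
      have := hdep v (by omega) hv2
      omega
    omega

/-- The BST-style treedepth decomposition of the path. -/
def ancDecomp (n : ℕ) : TreedepthDecomp (pathGraph n) where
  le u v := anc 0 n u.val v.val
  le_refl v := anc_self 0 n v.val (Nat.zero_le _) v.isLt
  le_trans {u v w} huv hvw := anc_trans 0 n u.val v.val w.val (Nat.zero_le _) w.isLt huv hvw
  le_antisymm {u v} huv hvu :=
    Fin.val_injective (anc_antisymm 0 n u.val v.val (Nat.zero_le _) v.isLt huv hvu)
  ancestors_chain v {a b} ha hb :=
    anc_chain 0 n a.val b.val v.val (Nat.zero_le _) v.isLt ha hb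
  covers {u v} huv := by
    rw [SimpleGraph.pathGraph_adj] at huv
    have hu := u.isLt
    have hv := v.isLt
    rcases huv with h | h
    · have := anc_cover 0 n u.val (Nat.zero_le _) (by omega)
      rw [h] at this
      exact this
    · have := anc_cover 0 n v.val (Nat.zero_le _) (by omega)
      rw [h] at this
      exact this.symm

lemma ancDecomp_depth_le (n : ℕ) : (ancDecomp n).depth ≤ Nat.clog 2 (n + 1) := by
  have hpow : n + 1 ≤ 2 ^ Nat.clog 2 (n + 1) := Nat.le_pow_clog one_lt_two (n + 1)
  have hbound : ∀ v : Fin n,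
      ({u : Fin n | (ancDecomp n).le u v} : Set (Fin n)).ncard ≤ Nat.clog 2 (n + 1) := by
    intro v
    have himg : {u : ℕ | anc 0 n u v.val} = Fin.val '' {u : Fin n | (ancDecomp n).le u v} := by
      ext u
      simp only [Set.mem_setOf_eq, Set.mem_image]
      constructor
      · intro h
        have hm := anc_mem 0 n u v.val (Nat.zero_le _) v.isLt h
        exact ⟨⟨u, hm.2⟩, h, rfl⟩
      · rintro ⟨w, hw, rfl⟩
        exact hw
    have h1 : ({u : Fin n | (ancDecomp n).le u v} : Set (Fin n)).ncard
        = {u : ℕ | anc 0 n u v.val}.ncard := by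
      rw [himg, Set.ncard_image_of_injective _ Fin.val_injective]
    rw [h1]
    exact anc_depth (Nat.clog 2 (n + 1)) 0 n v.val (Nat.zero_le _) v.isLt (by omega)
  show (⨆ v : Fin n, ({u : Fin n | (ancDecomp n).le u v} : Set (Fin n)).ncard)
      ≤ Nat.clog 2 (n + 1)
  rcases isEmpty_or_nonempty (Fin n) with h | h
  · rw [ciSup_of_empty]
    exact bot_le
  · exact ciSup_le hbound

lemma lower_bound (n : ℕ) (D : TreedepthDecomp (pathGraph n)) :
    Nat.clog 2 (n + 1) ≤ D.depth := by
  set L : ℕ → ℕ → Prop := fun u v => ∃ (hu : u < n) (hv : v < n), D.le ⟨u, hu⟩ ⟨v, hv⟩ with hL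
  have hkey := key D.depth 0 n L
    (fun v _ h2 => ⟨h2, h2, D.le_refl _⟩)
    (fun u v w ⟨hu, hv, h⟩ ⟨hv', hw, h'⟩ => ⟨hu, hw, D.le_trans h h'⟩)
    (fun u v ⟨hu, hv, h⟩ ⟨hv', hu', h'⟩ => by
      have := D.le_antisymm h h'
      exact congrArg Fin.val this)
    (fun v u u' ⟨hu, hv, h⟩ ⟨hu', hv', h'⟩ => by
      rcases D.ancestors_chain ⟨v, hv⟩ h h' with hc | hc
      · exact Or.inl ⟨hu, hu', hc⟩
      · exact Or.inr ⟨hu', hu, hc⟩)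
    (fun k _ h2 => by
      have hadj : (pathGraph n).Adj ⟨k, by omega⟩ ⟨k + 1, h2⟩ :=
        SimpleGraph.pathGraph_adj.mpr (Or.inl rfl)
      rcases D.covers hadj with hc | hc
      · exact Or.inl ⟨by omega, h2, hc⟩
      · exact Or.inr ⟨h2, by omega, hc⟩)
    ?_
  · have h1 : (1:ℕ) ≤ 2 ^ D.depth := Nat.one_le_two_pow
    have : n + 1 ≤ 2 ^ D.depth := by omega
    exact (Nat.clog_le_iff_le_pow one_lt_two).mpr this
  · intro v _ hv
    have himg : {u : ℕ | (0 ≤ u ∧ u < n) ∧ L u v}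
        = Fin.val '' {u : Fin n | D.le u ⟨v, hv⟩} := by
      ext u
      simp only [Set.mem_setOf_eq, Set.mem_image]
      constructor
      · rintro ⟨⟨_, hun⟩, hu', hv', h⟩
        exact ⟨⟨u, hun⟩, h, rfl⟩
      · rintro ⟨w, hw, rfl⟩
        exact ⟨⟨Nat.zero_le _, w.isLt⟩, w.isLt, hv, hw⟩
    rw [himg, Set.ncard_image_of_injective _ Fin.val_injective]
    have hb : BddAbove (Set.range fun v : Fin n =>
        ({u : Fin n | D.le u v} : Set (Fin n)).ncard) :=
      (Set.finite_range _).bddAbove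
    exact le_ciSup hb (⟨v, hv⟩ : Fin n)

theorem stmt18 (n : ℕ) : treedepth (pathGraph n) = Nat.clog 2 (n + 1) := by
  unfold treedepth
  apply le_antisymm
  · refine le_trans ?_ (ancDecomp_depth_le n)
    apply Nat.sInf_le
    exact ⟨ancDecomp n, rfl⟩
  · apply le_csInf
    · exact ⟨(ancDecomp n).depth, ancDecomp n, rfl⟩
    · rintro d ⟨D, rfl⟩
      exact lower_bound n D
end Awesome
end

section
/- Let G be a graph that admits a partition of its vertex set into S and V(G)\S such that G − S is bipartite. Then for any maximum-weight independent set J of G (with respect to a weight function w: V(G) → ℝ≥0), writing I = J ∩ S, the set J \ S is a maximum-weight independent set of the induced subgraph of G on (V(G) \ S) \ N(I), where N(I) is the set of vertices outside I with a neighbor in I. -/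
namespace Awesome

open SimpleGraph

theorem stmt19 {V : Type} [Fintype V] [DecidableEq V] (G : SimpleGraph V)
    (w : V → NNReal) (S : Finset V)
    (hbip : (G.induce ((↑S : Set V)ᶜ)).Colorable 2)
    (J : Finset V) (hJind : ∀ u ∈ J, ∀ v ∈ J, ¬ G.Adj u v)
    (hJmax : ∀ J' : Finset V, (∀ u ∈ J', ∀ v ∈ J', ¬ G.Adj u v) →
      ∑ v ∈ J', w v ≤ ∑ v ∈ J, w v) :
    (↑(J \ S) : Set V) ⊆
        {v : V | v ∉ S ∧ ¬ ∃ u ∈ (J ∩ S : Finset V), G.Adj u v} ∧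
    ∀ T : Finset V,
      (↑T : Set V) ⊆ {v : V | v ∉ S ∧ ¬ ∃ u ∈ (J ∩ S : Finset V), G.Adj u v} →
      (∀ u ∈ T, ∀ v ∈ T, ¬ G.Adj u v) →
      ∑ v ∈ T, w v ≤ ∑ v ∈ (J \ S), w v := by
  constructor
  · intro v hv
    simp only [Finset.coe_sdiff, Set.mem_diff, Finset.mem_coe] at hv
    refine ⟨hv.2, ?_⟩
    rintro ⟨u, hu, hadj⟩
    exact hJind u (Finset.mem_inter.1 hu).1 v hv.1 hadj
  · intro T hTsub hTind
    have hdisj : Disjoint (J ∩ S) T := by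
      rw [Finset.disjoint_right]
      intro v hvT hvJS
      exact (hTsub hvT).1 (Finset.mem_inter.1 hvJS).2
    have hind : ∀ u ∈ (J ∩ S) ∪ T, ∀ v ∈ (J ∩ S) ∪ T, ¬ G.Adj u v := by
      intro u hu v hv
      rcases Finset.mem_union.1 hu with hu | hu <;>
        rcases Finset.mem_union.1 hv with hv | hv
      · exact hJind u (Finset.mem_inter.1 hu).1 v (Finset.mem_inter.1 hv).1
      · intro h
        exact (hTsub hv).2 ⟨u, hu, h⟩
      · intro h
        exact (hTsub hu).2 ⟨v, hv, h.symm⟩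
      · exact hTind u hu v hv
    have h1 := hJmax ((J ∩ S) ∪ T) hind
    rw [Finset.sum_union hdisj] at h1
    have h2 : ∑ v ∈ J ∩ S, w v + ∑ v ∈ J \ S, w v = ∑ v ∈ J, w v :=
      Finset.sum_inter_add_sum_sdiff J S w
    rw [← h2] at h1
    exact le_of_add_le_add_left h1
end Awesome
end
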